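/- Let n ≥ 1, let S be a nonempty subset of 𝔽_2^{2n} \ {0}, and fix M ∈ ℝ^S. If y ∈ ℝ^S satisfies Σ_{a ∈ S} (−1)^{⟨a,b⟩} y_a ≤ 1 for every b ∈ 𝔽_2^{2n}, then Σ_{a ∈ S} M_a y_a ≤ Σ_{a ∈ S} |M_a|. -/
import Mathlib


/-- Binary symplectic vectors: `𝔽_2^{2n}` presented as pairs `(a_x, a_z)` of
vectors in `𝔽_2^n`. -/
abbrev BV (n : ℕ) := (Fin n → ZMod 2) × (Fin n → ZMod 2)

/-- The binary symplectic form `⟨a,b⟩ = a_x · b_z + a_z · b_x` (mod 2). -/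
def symp {n : ℕ} (a b : BV n) : ZMod 2 :=
  (∑ i, a.1 i * b.2 i) + (∑ i, a.2 i * b.1 i)

/-- The real sign `(−1)^{⟨a,b⟩} ∈ {−1, 1} ⊆ ℝ`. -/
noncomputable def wsgn {n : ℕ} (a b : BV n) : ℝ := (-1 : ℝ) ^ (symp a b).val

lemma zmod2_cases (x : ZMod 2) : x = 0 ∨ x = 1 := by revert x; decide

lemma negpow_add (x z : ZMod 2) : ((-1:ℝ))^((x+z).val) = (-1:ℝ)^x.val * (-1:ℝ)^z.val := by
  rcases zmod2_cases x with h | h <;> rcases zmod2_cases z with h' | h' <;>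
    subst h <;> subst h' <;> norm_num [show ((2:ZMod 2)).val = 0 from rfl] <;>
    simp [show ((1:ZMod 2)+1) = 0 from rfl, show ((0:ZMod 2)).val = 0 from rfl,
      show ((1:ZMod 2)).val = 1 from rfl]

lemma symp_add_left {n : ℕ} (a a' b : BV n) : symp (a + a') b = symp a b + symp a' b := by
  simp only [symp, Prod.fst_add, Prod.snd_add, Pi.add_apply, add_mul, Finset.sum_add_distrib]
  ring

lemma symp_add_right {n : ℕ} (a b b' : BV n) : symp a (b + b') = symp a b + symp a b' := by
  simp only [symp, Prod.fst_add, Prod.snd_add, Pi.add_apply, mul_add, Finset.sum_add_distrib]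
  ring

lemma wsgn_add_left {n : ℕ} (a a' b : BV n) : wsgn (a + a') b = wsgn a b * wsgn a' b := by
  rw [wsgn, symp_add_left, negpow_add]; rfl

lemma wsgn_add_right {n : ℕ} (a b b' : BV n) : wsgn a (b + b') = wsgn a b * wsgn a b' := by
  rw [wsgn, symp_add_right, negpow_add]; rfl

lemma exists_symp_one {n : ℕ} {c : BV n} (hc : c ≠ 0) : ∃ b₀ : BV n, symp c b₀ = 1 := by
  by_cases h1 : c.1 = 0
  · have h2 : c.2 ≠ 0 := fun h2 => hc (Prod.ext h1 h2)
    obtain ⟨j, hj⟩ := Function.ne_iff.mp h2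
    simp only [Pi.zero_apply] at hj
    have hcj : c.2 j = 1 := (zmod2_cases _).resolve_left hj
    refine ⟨((fun i => if i = j then 1 else 0), 0), ?_⟩
    simp [symp, mul_ite, Finset.sum_ite_eq', h1, hcj]
  · obtain ⟨j, hj⟩ := Function.ne_iff.mp h1
    simp only [Pi.zero_apply] at hj
    have hcj : c.1 j = 1 := (zmod2_cases _).resolve_left hj
    refine ⟨(0, (fun i => if i = j then 1 else 0)), ?_⟩
    simp [symp, mul_ite, Finset.sum_ite_eq', hcj]

lemma sum_wsgn_eq_zero {n : ℕ} {c : BV n} (hc : c ≠ 0) :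
    ∑ b : BV n, wsgn c b = 0 := by
  obtain ⟨b₀, hb₀⟩ := exists_symp_one hc
  have key : ∑ b : BV n, wsgn c b = - ∑ b : BV n, wsgn c b := by
    calc ∑ b : BV n, wsgn c b = ∑ b : BV n, wsgn c (b + b₀) :=
          (Fintype.sum_equiv (Equiv.addRight b₀) _ _ (fun b => rfl)).symm
      _ = ∑ b : BV n, wsgn c b * wsgn c b₀ := by simp [wsgn_add_right]
      _ = - ∑ b : BV n, wsgn c b := by
          simp [wsgn, hb₀, show ((1:ZMod 2)).val = 1 from rfl, ← Finset.sum_neg_distrib]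
  linarith

lemma wsgn_sq {n : ℕ} (a b : BV n) : wsgn a b * wsgn a b = 1 := by
  rw [wsgn, ← pow_add]
  exact Even.neg_one_pow ⟨(symp a b).val, rfl⟩

lemma abs_wsgn {n : ℕ} (a b : BV n) : |wsgn a b| = 1 := by
  rcases Nat.even_or_odd ((symp a b).val) with h | h
  · simp [wsgn, h.neg_one_pow]
  · simp [wsgn, h.neg_one_pow]

/-- dual feasibility bounds the dual objective by the ℓ1-norm of `M`. -/
theorem stmt_4 (n : ℕ) (hn : 1 ≤ n) (S : Finset (BV n)) (hS : S.Nonempty)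
    (h0 : (0 : BV n) ∉ S) (M : BV n → ℝ)
    (y : BV n → ℝ) (hy : ∀ b : BV n, ∑ a ∈ S, wsgn a b * y a ≤ 1) :
    ∑ a ∈ S, M a * y a ≤ ∑ a ∈ S, |M a| := by
  set N : ℝ := (Fintype.card (BV n) : ℝ) with hN
  have hNpos : (0:ℝ) < N := by
    rw [hN]; exact_mod_cast Fintype.card_pos
  set f : BV n → ℝ := fun b => ∑ a ∈ S, wsgn a b * y a with hf
  set g : BV n → ℝ := fun b => ∑ a ∈ S, M a * wsgn a b with hg
  set C : ℝ := ∑ a ∈ S, |M a| with hC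
  have hne : ∀ a ∈ S, a ≠ 0 := fun a ha h => h0 (h ▸ ha)
  have haa : ∀ v : BV n, v + v = 0 := fun v => by
    ext i <;> exact CharTwo.add_self_eq_zero _
  -- orthogonality
  have orth : ∀ a' a : BV n, ∑ b : BV n, wsgn a b * wsgn a' b = if a' = a then N else 0 := by
    intro a' a
    have h1 : ∀ b, wsgn a b * wsgn a' b = wsgn (a + a') b := fun b => (wsgn_add_left a a' b).symm
    simp only [h1]
    by_cases h : a' = a
    · subst h
      rw [haa a']
      simp [wsgn, symp, if_pos rfl, hN]
    · rw [if_neg h]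
      apply sum_wsgn_eq_zero
      intro h0'
      exact h ((neg_eq_of_add_eq_zero_right h0').symm.trans
        (neg_eq_of_add_eq_zero_right (haa a)))
  have hrec : ∀ a ∈ S, ∑ b : BV n, wsgn a b * f b = N * y a := by
    intro a ha
    calc ∑ b : BV n, wsgn a b * f b
        = ∑ b : BV n, ∑ a' ∈ S, wsgn a b * (wsgn a' b * y a') := by
          simp [hf, Finset.mul_sum]
      _ = ∑ a' ∈ S, ∑ b : BV n, wsgn a b * (wsgn a' b * y a') := Finset.sum_comm
      _ = ∑ a' ∈ S, (∑ b : BV n, wsgn a b * wsgn a' b) * y a' := by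
          refine Finset.sum_congr rfl fun a' _ => ?_
          rw [Finset.sum_mul]
          exact Finset.sum_congr rfl fun b _ => (mul_assoc _ _ _).symm
      _ = ∑ a' ∈ S, (if a' = a then N else 0) * y a' := by
          refine Finset.sum_congr rfl fun a' _ => by rw [orth]
      _ = N * y a := by
          simp only [ite_mul, zero_mul]
          rw [Finset.sum_ite_eq' S a (fun a' => N * y a')]
          simp [ha]
  have hsumf : ∑ b : BV n, f b = 0 := by
    calc ∑ b : BV n, f b = ∑ a ∈ S, ∑ b : BV n, wsgn a b * y a := Finset.sum_comm
      _ = ∑ a ∈ S, (∑ b : BV n, wsgn a b) * y a := by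
          refine Finset.sum_congr rfl fun a _ => by rw [Finset.sum_mul]
      _ = 0 := Finset.sum_eq_zero fun a ha => by
          rw [sum_wsgn_eq_zero (hne a ha), zero_mul]
  have hsumg : ∑ b : BV n, g b = 0 := by
    calc ∑ b : BV n, g b = ∑ a ∈ S, ∑ b : BV n, M a * wsgn a b := Finset.sum_comm
      _ = ∑ a ∈ S, M a * (∑ b : BV n, wsgn a b) := by
          refine Finset.sum_congr rfl fun a _ => by rw [Finset.mul_sum]
      _ = 0 := Finset.sum_eq_zero fun a ha => by
          rw [sum_wsgn_eq_zero (hne a ha), mul_zero]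
  have hgC : ∀ b : BV n, 0 ≤ g b + C := by
    intro b
    have habs : |g b| ≤ C := by
      calc |g b| ≤ ∑ a ∈ S, |M a * wsgn a b| := Finset.abs_sum_le_sum_abs _ _
        _ = C := by
            rw [hC]
            exact Finset.sum_congr rfl fun a _ => by rw [abs_mul, abs_wsgn, mul_one]
    linarith [neg_abs_le (g b)]
  have key : N * (∑ a ∈ S, M a * y a) = ∑ b : BV n, f b * g b := by
    calc N * (∑ a ∈ S, M a * y a) = ∑ a ∈ S, M a * (N * y a) := by
          rw [Finset.mul_sum]; exact Finset.sum_congr rfl fun a _ => by ring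
      _ = ∑ a ∈ S, M a * (∑ b : BV n, wsgn a b * f b) := by
          refine Finset.sum_congr rfl fun a ha => by rw [hrec a ha]
      _ = ∑ a ∈ S, ∑ b : BV n, M a * (wsgn a b * f b) := by
          refine Finset.sum_congr rfl fun a _ => by rw [Finset.mul_sum]
      _ = ∑ b : BV n, ∑ a ∈ S, M a * (wsgn a b * f b) := Finset.sum_comm
      _ = ∑ b : BV n, f b * g b := by
          refine Finset.sum_congr rfl fun b _ => ?_
          rw [hg, Finset.mul_sum]
          exact Finset.sum_congr rfl fun a _ => by ring
  have step : ∑ b : BV n, f b * g b ≤ N * C := by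
    have h1 : ∑ b : BV n, f b * g b = ∑ b : BV n, f b * (g b + C) := by
      simp only [mul_add, Finset.sum_add_distrib, ← Finset.sum_mul, hsumf, zero_mul, add_zero]
    rw [h1]
    calc ∑ b : BV n, f b * (g b + C) ≤ ∑ b : BV n, (g b + C) :=
          Finset.sum_le_sum fun b _ => mul_le_of_le_one_left (hgC b) (hy b)
      _ = N * C := by
          rw [Finset.sum_add_distrib, hsumg, zero_add, Finset.sum_const, nsmul_eq_mul, hN, Finset.card_univ]
  have : N * (∑ a ∈ S, M a * y a) ≤ N * C := key ▸ step
  exact le_of_mul_le_mul_left this hNpos
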